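/- If G is dicotic and x is a dyadic rational, then G → x = G + x as game values. -/

import Mathlib

universe u

namespace SetTheory

/-- Combinatorial pregames (removed from Mathlib; restored with the old definition). -/
inductive PGame : Type (u + 1)
  | mk : ∀ α β : Type u, (α → PGame) → (β → PGame) → PGame

namespace PGame

def LeftMoves : PGame.{u} → Type u
  | mk l _ _ _ => l

def RightMoves : PGame.{u} → Type u
  | mk _ r _ _ => r

def moveLeft : ∀ g : PGame.{u}, LeftMoves g → PGame.{u}
  | mk _ _ L _ => L

def moveRight : ∀ g : PGame.{u}, RightMoves g → PGame.{u}
  | mk _ _ _ R => R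

instance : Zero PGame.{u} :=
  ⟨⟨PEmpty, PEmpty, PEmpty.elim, PEmpty.elim⟩⟩

instance : One PGame.{u} :=
  ⟨⟨PUnit, PEmpty, fun _ => 0, PEmpty.elim⟩⟩

/-- The pair `(x ≤ y, x ⧏ y)`, defined by simultaneous recursion as in old Mathlib. -/
noncomputable def leLF (x : PGame.{u}) : PGame.{u} → Prop × Prop := by
  induction x with | mk xl xr xL xR IHxl IHxr => ?_
  intro y
  induction y with | mk yl yr yL yR IHyl IHyr => ?_
  exact ((∀ i, (IHxl i (mk yl yr yL yR)).2) ∧ ∀ j, (IHyr j).2,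
    (∃ i, (IHyl i).1) ∨ ∃ j, (IHxr j (mk yl yr yL yR)).1)

noncomputable instance : LE PGame.{u} :=
  ⟨fun x y => (leLF x y).1⟩

/-- Game equivalence `x ≈ y ↔ x ≤ y ∧ y ≤ x`. -/
noncomputable instance : HasEquiv PGame.{u} :=
  ⟨fun x y => x ≤ y ∧ y ≤ x⟩

def neg : PGame.{u} → PGame.{u}
  | mk l r L R => mk r l (fun i => neg (R i)) (fun i => neg (L i))

instance : Neg PGame.{u} :=
  ⟨neg⟩

/-- Inner recursion of the sum `x + y` on `y`, given the sums with the options of `x`. -/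
def addAux (xl xr : Type u) (IHl : xl → PGame.{u} → PGame.{u})
    (IHr : xr → PGame.{u} → PGame.{u}) : PGame.{u} → PGame.{u}
  | mk yl yr yL yR =>
    mk (xl ⊕ yl) (xr ⊕ yr)
      (Sum.rec (fun i => IHl i (mk yl yr yL yR)) (fun i => addAux xl xr IHl IHr (yL i)))
      (Sum.rec (fun i => IHr i (mk yl yr yL yR)) (fun i => addAux xl xr IHl IHr (yR i)))

/-- The disjunctive sum of pregames. -/
def add : PGame.{u} → PGame.{u} → PGame.{u}
  | mk xl xr xL xR => addAux xl xr (fun i => add (xL i)) (fun i => add (xR i))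

instance : Add PGame.{u} :=
  ⟨add⟩

instance : Sub PGame.{u} :=
  ⟨fun x y => x + -y⟩

/-- The game `∗ = {0 | 0}`. -/
def star : PGame.{u} :=
  ⟨PUnit, PUnit, fun _ => 0, fun _ => 0⟩

/-- `powHalf n` is the pregame for `1 / 2 ^ n`. -/
def powHalf : ℕ → PGame
  | 0 => 1
  | n + 1 => ⟨PUnit, PUnit, fun _ => 0, fun _ => powHalf n⟩

/-- A short pregame: finitely many positions, with decidable equality on moves. -/
class inductive Short : PGame.{u} → Type (u + 1)
  | mk : ∀ {α β : Type u} {L : α → PGame.{u}} {R : β → PGame.{u}} (_ : ∀ i : α, Short (L i))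
      (_ : ∀ j : β, Short (R j)) [Fintype α] [Fintype β] [DecidableEq α] [DecidableEq β],
      Short ⟨α, β, L, R⟩

/-- `n • x` as the iterated sum `x + ⋯ + x` (as `nsmulRec` in `Game`). -/
def nsmulPG : ℕ → PGame.{u} → PGame.{u}
  | 0, _ => 0
  | n + 1, x => nsmulPG n x + x

/-- `m • x` for `m : ℤ` (as `zsmulRec` in `Game`). -/
def zsmulPG : ℤ → PGame.{u} → PGame.{u}
  | Int.ofNat n, x => nsmulPG n x
  | Int.negSucc n, x => -(nsmulPG (n + 1) x)

end PGame

end SetTheory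

open SetTheory

open scoped PGame

namespace SeqCompound

open Classical in
/-- The sequential compound `G → H` of two pregames. -/
noncomputable def seqc : PGame → PGame → PGame
  | PGame.mk α β L R, H =>
    if Nonempty α then
      if Nonempty β then
        PGame.mk α β (fun a => seqc (L a) H) (fun b => seqc (R b) H)
      else
        PGame.mk α H.RightMoves (fun a => seqc (L a) H) H.moveRight
    else
      if Nonempty β then
        PGame.mk H.LeftMoves β H.moveLeft (fun b => seqc (R b) H)
      else H

/-- A pregame is dicotic (all-small) if in every subposition,
Left has an option iff Right has an option. -/
def Dicotic : PGame → Prop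
  | PGame.mk α β L R =>
    (Nonempty α ↔ Nonempty β) ∧ (∀ a, Dicotic (L a)) ∧ (∀ b, Dicotic (R b))

/-- The canonical nonnegative integer game `{n-1 | }`. -/
def intGame : ℕ → PGame
  | 0 => 0
  | n + 1 => PGame.mk PUnit PEmpty (fun _ => intGame n) PEmpty.elim

/-- `upSum k` is the disjunctive sum `↑¹ + ↑² + ⋯ + ↑ᵏ`. -/
def upSum : ℕ → PGame
  | 0 => 0
  | k + 1 => upSum k +
      PGame.mk PUnit PUnit (fun _ => 0) (fun _ => PGame.star - upSum k)

/-- `upPow k` is the game `↑^(k+1) = {0 | ∗ - (↑¹ + ⋯ + ↑ᵏ)}`. -/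
def upPow (k : ℕ) : PGame :=
  PGame.mk PUnit PUnit (fun _ => 0) (fun _ => PGame.star - upSum k)

/-- Sequential compound of a list of games. -/
noncomputable def seqList : List PGame → PGame
  | [] => 0
  | G :: l => seqc G (seqList l)

end SeqCompound


/-!
Dicotic games are infinitesimal: a dicotic `D` lies below every positive number `z`, because
either some right option of `D` already lies below `z`, or `D` has no options at all and is `0`.
Since differences of dicotic games are dicotic, `A + y ≤ B + y'` for dicotic `A`, `B` and
numbers `y < y'`.

Now induct on `G`. If `G` has no options, `G → Y = Y` and `G = 0`. Otherwise `G → Y` has exactly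
the options `Gᴸ → Y` and `Gᴿ → Y`, which by induction are `Gᴸ + Y` and `Gᴿ + Y`, while `G + Y`
has in addition the moves in `Y`; these are dominated, e.g. `G + Yᴸ ≤ Gᴸ + Y` by the inequality
above. Hence `G → Y = G + Y` for numbers `Y`, and monotonicity of `G → ·` extends this to
games equal to a number, such as dyadic rationals.
-/
namespace SetTheory.PGame

def LF (x y : PGame.{u}) : Prop :=
  (leLF x y).2

infix:50 " ⧏ " => LF

section Order

variable {xl xr yl yr : Type u} {xL : xl → PGame.{u}} {xR : xr → PGame.{u}}
  {yL : yl → PGame.{u}} {yR : yr → PGame.{u}}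

theorem mk_le_mk :
    mk xl xr xL xR ≤ mk yl yr yL yR ↔
      (∀ i, xL i ⧏ mk yl yr yL yR) ∧ ∀ j, mk xl xr xL xR ⧏ yR j :=
  Iff.rfl

theorem mk_lf_mk :
    mk xl xr xL xR ⧏ mk yl yr yL yR ↔
      (∃ i, mk xl xr xL xR ≤ yL i) ∨ ∃ j, xR j ≤ mk yl yr yL yR :=
  Iff.rfl

theorem le_iff_forall_lf {x y : PGame.{u}} :
    x ≤ y ↔ (∀ i, x.moveLeft i ⧏ y) ∧ ∀ j, x ⧏ y.moveRight j := by
  cases x; cases y; exact Iff.rfl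

theorem lf_iff_exists_le {x y : PGame.{u}} :
    x ⧏ y ↔ (∃ i, x ≤ y.moveLeft i) ∨ ∃ j, x.moveRight j ≤ y := by
  cases x; cases y; exact Iff.rfl

theorem le_iff_not_lf_and_le_iff_not_lf (x y : PGame.{u}) :
    (x ≤ y ↔ ¬ y ⧏ x) ∧ (y ≤ x ↔ ¬ x ⧏ y) := by
  induction x generalizing y with | mk xl xr xL xR IHxl IHxr =>
  induction y with | mk yl yr yL yR IHyl IHyr =>
  constructor
  all_goals
    rw [mk_le_mk, mk_lf_mk, not_or, not_exists, not_exists]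
    refine and_congr (forall_congr' fun i => ?_) (forall_congr' fun j => ?_)
  · rw [(IHxl i _).2, not_not]
  · rw [(IHyr j).2, not_not]
  · rw [(IHyl i).1, not_not]
  · rw [(IHxr j _).1, not_not]

theorem not_le {x y : PGame.{u}} : ¬ x ≤ y ↔ y ⧏ x := by
  rw [(le_iff_not_lf_and_le_iff_not_lf x y).1, not_not]

theorem not_lf {x y : PGame.{u}} : ¬ x ⧏ y ↔ y ≤ x :=
  (le_iff_not_lf_and_le_iff_not_lf x y).2.symm

theorem lf_of_le_moveLeft {x y : PGame.{u}} {i : y.LeftMoves} (h : x ≤ y.moveLeft i) : x ⧏ y :=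
  lf_iff_exists_le.2 (Or.inl ⟨i, h⟩)

theorem lf_of_moveRight_le {x y : PGame.{u}} {j : x.RightMoves} (h : x.moveRight j ≤ y) :
    x ⧏ y :=
  lf_iff_exists_le.2 (Or.inr ⟨j, h⟩)

theorem moveLeft_lf_of_le {x y : PGame.{u}} (h : x ≤ y) (i : x.LeftMoves) : x.moveLeft i ⧏ y :=
  (le_iff_forall_lf.1 h).1 i

theorem lf_moveRight_of_le {x y : PGame.{u}} (h : x ≤ y) (j : y.RightMoves) :
    x ⧏ y.moveRight j :=
  (le_iff_forall_lf.1 h).2 j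

protected theorem le_refl (x : PGame.{u}) : x ≤ x := by
  induction x with | mk xl xr xL xR IHl IHr =>
  exact mk_le_mk.2 ⟨fun i => lf_of_le_moveLeft (i := i) (IHl i),
    fun j => lf_of_moveRight_le (j := j) (IHr j)⟩

theorem moveLeft_lf {x : PGame.{u}} (i : x.LeftMoves) : x.moveLeft i ⧏ x :=
  lf_of_le_moveLeft (PGame.le_refl _)

theorem lf_moveRight {x : PGame.{u}} (j : x.RightMoves) : x ⧏ x.moveRight j :=
  lf_of_moveRight_le (PGame.le_refl _)

theorem le_trans_of_moves {x y z : PGame.{u}}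
    (h₁ : ∀ {i}, y ≤ z → z ≤ x.moveLeft i → y ≤ x.moveLeft i)
    (h₂ : ∀ {j}, z.moveRight j ≤ x → x ≤ y → z.moveRight j ≤ y) (hxy : x ≤ y) (hyz : y ≤ z) :
    x ≤ z :=
  le_iff_forall_lf.2
    ⟨fun i => not_le.1 fun h => not_lf.2 (h₁ hyz h) (moveLeft_lf_of_le hxy i),
      fun j => not_le.1 fun h => not_lf.2 (h₂ h hxy) (lf_moveRight_of_le hyz j)⟩

/-- The three rotations of transitivity are proved together: each one, on the options, needs
the others. -/
theorem le_trans_rotations (x y z : PGame.{u}) :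
    (x ≤ y → y ≤ z → x ≤ z) ∧ (y ≤ z → z ≤ x → y ≤ x) ∧ (z ≤ x → x ≤ y → z ≤ y) := by
  induction x generalizing y z with | mk xl xr xL xR IHxl IHxr =>
  induction y generalizing z with | mk yl yr yL yR IHyl IHyr =>
  induction z with | mk zl zr zL zR IHzl IHzr =>
  exact ⟨le_trans_of_moves (fun {i} => (IHxl i _ _).2.1) (fun {j} => (IHzr j).2.2),
    le_trans_of_moves (fun {i} => (IHyl i _).2.2) (fun {j} => (IHxr j _ _).1),
    le_trans_of_moves (fun {i} => (IHzl i).1) (fun {j} => (IHyr j _).2.1)⟩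

protected theorem le_trans {x y z : PGame.{u}} : x ≤ y → y ≤ z → x ≤ z :=
  (le_trans_rotations x y z).1

noncomputable instance : Preorder PGame.{u} where
  le_refl := PGame.le_refl
  le_trans _ _ _ := PGame.le_trans

theorem _root_.LE.le.trans_lf {x y z : PGame.{u}} (h₁ : x ≤ y) (h₂ : y ⧏ z) : x ⧏ z :=
  not_le.1 fun h => not_le.2 h₂ (h.trans h₁)

theorem LF.trans_le {x y z : PGame.{u}} (h₁ : x ⧏ y) (h₂ : y ≤ z) : x ⧏ z :=
  not_le.1 fun h => not_le.2 h₁ (h₂.trans h)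

theorem lf_of_lt {x y : PGame.{u}} (h : x < y) : x ⧏ y :=
  not_le.1 (lt_iff_le_not_ge.1 h).2

end Order

section Equiv

variable {x y z : PGame.{u}}

theorem equiv_refl (x : PGame.{u}) : x ≈ x :=
  ⟨le_rfl, le_rfl⟩

theorem equiv_symm (h : x ≈ y) : y ≈ x :=
  ⟨h.2, h.1⟩

theorem equiv_trans (h₁ : x ≈ y) (h₂ : y ≈ z) : x ≈ z :=
  ⟨h₁.1.trans h₂.1, h₂.2.trans h₁.2⟩

theorem le_congr {x₁ y₁ x₂ y₂ : PGame.{u}} (hx : x₁ ≈ x₂) (hy : y₁ ≈ y₂) :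
    x₁ ≤ y₁ ↔ x₂ ≤ y₂ :=
  ⟨fun h => hx.2.trans (h.trans hy.1), fun h => hx.1.trans (h.trans hy.2)⟩

instance setoid : Setoid PGame.{u} :=
  ⟨(· ≈ ·), ⟨equiv_refl, equiv_symm, equiv_trans⟩⟩

theorem mk_equiv_mk_of_equiv {xl xr yl yr : Type u} {xL : xl → PGame.{u}} {xR : xr → PGame.{u}}
    {yL : yl → PGame.{u}} {yR : yr → PGame.{u}} (eL : xl ≃ yl) (eR : xr ≃ yr)
    (hL : ∀ i, xL i ≈ yL (eL i)) (hR : ∀ j, xR j ≈ yR (eR j)) :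
    mk xl xr xL xR ≈ mk yl yr yL yR := by
  refine ⟨mk_le_mk.2 ⟨fun i => lf_of_le_moveLeft (i := eL i) (hL i).1, fun j => ?_⟩,
    mk_le_mk.2 ⟨fun i => ?_, fun j => lf_of_moveRight_le (j := eR j) (hR j).2⟩⟩
  · have h := (hR (eR.symm j)).1
    rw [eR.apply_symm_apply] at h
    exact lf_of_moveRight_le (j := eR.symm j) h
  · have h := (hL (eL.symm i)).2
    rw [eL.apply_symm_apply] at h
    exact lf_of_le_moveLeft (i := eL.symm i) h

theorem mk_equiv_zero {xl xr : Type u} {xL : xl → PGame.{u}} {xR : xr → PGame.{u}} [IsEmpty xl]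
    [IsEmpty xr] : mk xl xr xL xR ≈ 0 :=
  mk_equiv_mk_of_equiv (Equiv.equivPEmpty xl) (Equiv.equivPEmpty xr) isEmptyElim isEmptyElim

end Equiv

section Add

variable {xl xr yl yr : Type u} {xL : xl → PGame.{u}} {xR : xr → PGame.{u}}
  {yL : yl → PGame.{u}} {yR : yr → PGame.{u}}

theorem mk_add_mk :
    mk xl xr xL xR + mk yl yr yL yR =
      mk (xl ⊕ yl) (xr ⊕ yr) (Sum.elim (xL · + mk yl yr yL yR) (mk xl xr xL xR + yL ·))
        (Sum.elim (xR · + mk yl yr yL yR) (mk xl xr xL xR + yR ·)) :=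
  rfl

theorem neg_mk : -mk xl xr xL xR = mk xr xl (fun j => -xR j) (fun i => -xL i) :=
  rfl

theorem add_lf_of_moveRight_add_le {x y z : PGame.{u}} (j : x.RightMoves)
    (h : x.moveRight j + y ≤ z) :
    x + y ⧏ z := by
  cases x; cases y
  exact lf_of_moveRight_le (j := Sum.inl j) h

theorem add_lf_of_add_moveRight_le {x y z : PGame.{u}} (j : y.RightMoves)
    (h : x + y.moveRight j ≤ z) :
    x + y ⧏ z := by
  cases x; cases y
  exact lf_of_moveRight_le (j := Sum.inr j) h

theorem lf_add_of_le_moveLeft_add {x y z : PGame.{u}} (i : x.LeftMoves) (h : z ≤ x.moveLeft i + y) :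
    z ⧏ x + y := by
  cases x; cases y
  exact lf_of_le_moveLeft (i := Sum.inl i) h

theorem lf_add_of_le_add_moveLeft {x y z : PGame.{u}} (i : y.LeftMoves) (h : z ≤ x + y.moveLeft i) :
    z ⧏ x + y := by
  cases x; cases y
  exact lf_of_le_moveLeft (i := Sum.inr i) h

theorem add_le_add_right_and_add_lf_add_right (x y z : PGame.{u}) :
    (x ≤ y → x + z ≤ y + z) ∧ (x ⧏ y → x + z ⧏ y + z) := by
  induction x generalizing y z with | mk xl xr xL xR IHxl IHxr =>
  induction y generalizing z with | mk yl yr yL yR IHyl IHyr =>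
  induction z with | mk zl zr zL zR IHzl IHzr =>
  set x := mk xl xr xL xR
  set y := mk yl yr yL yR
  set z := mk zl zr zL zR
  refine ⟨fun h => ?_, fun h => ?_⟩
  · obtain ⟨hL, hR⟩ := mk_le_mk.1 h
    rw [mk_add_mk, mk_add_mk, mk_le_mk, Sum.forall, Sum.forall]
    exact ⟨⟨fun i => (IHxl i y z).2 (hL i),
        fun i => lf_of_le_moveLeft (i := Sum.inr i) ((IHzl i).1 h)⟩,
      fun j => (IHyr j z).2 (hR j), fun j => lf_of_moveRight_le (j := Sum.inr j) ((IHzr j).1 h)⟩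
  · rcases mk_lf_mk.1 h with ⟨i, hi⟩ | ⟨j, hj⟩
    · exact lf_of_le_moveLeft (i := Sum.inl i) ((IHyl i z).1 hi)
    · exact lf_of_moveRight_le (j := Sum.inl j) ((IHxr j y z).1 hj)

theorem add_le_add_right' {x y : PGame.{u}} (h : x ≤ y) (z : PGame.{u}) : x + z ≤ y + z :=
  (add_le_add_right_and_add_lf_add_right x y z).1 h

theorem add_comm_equiv (x y : PGame.{u}) : x + y ≈ y + x := by
  induction x generalizing y with | mk xl xr xL xR IHxl IHxr =>
  induction y with | mk yl yr yL yR IHyl IHyr =>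
  exact mk_equiv_mk_of_equiv (Equiv.sumComm _ _) (Equiv.sumComm _ _)
    (Sum.forall.2 ⟨fun i => IHxl i _, IHyl⟩) (Sum.forall.2 ⟨fun j => IHxr j _, IHyr⟩)

theorem add_assoc_equiv (x y z : PGame.{u}) : x + y + z ≈ x + (y + z) := by
  induction x generalizing y z with | mk xl xr xL xR IHxl IHxr =>
  induction y generalizing z with | mk yl yr yL yR IHyl IHyr =>
  induction z with | mk zl zr zL zR IHzl IHzr =>
  exact mk_equiv_mk_of_equiv (Equiv.sumAssoc _ _ _) (Equiv.sumAssoc _ _ _)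
    (Sum.forall.2 ⟨Sum.forall.2 ⟨fun i => IHxl i _ _, fun i => IHyl i _⟩, IHzl⟩)
    (Sum.forall.2 ⟨Sum.forall.2 ⟨fun j => IHxr j _ _, fun j => IHyr j _⟩, IHzr⟩)

theorem add_zero_equiv (x : PGame.{u}) : x + 0 ≈ x := by
  induction x with | mk xl xr xL xR IHl IHr =>
  exact mk_equiv_mk_of_equiv (Equiv.sumEmpty _ _) (Equiv.sumEmpty _ _)
    (Sum.forall.2 ⟨IHl, nofun⟩) (Sum.forall.2 ⟨IHr, nofun⟩)

theorem zero_add_equiv (x : PGame.{u}) : 0 + x ≈ x :=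
  equiv_trans (add_comm_equiv 0 x) (add_zero_equiv x)

theorem add_congr {x₁ x₂ y₁ y₂ : PGame.{u}} (hx : x₁ ≈ x₂) (hy : y₁ ≈ y₂) :
    x₁ + y₁ ≈ x₂ + y₂ := by
  have add_le_add_left' {x y : PGame.{u}} (h : x ≤ y) (z : PGame.{u}) : z + x ≤ z + y :=
    (add_comm_equiv z x).1.trans ((add_le_add_right' h z).trans (add_comm_equiv y z).1)
  exact ⟨(add_le_add_right' hx.1 _).trans (add_le_add_left' hy.1 _),
    (add_le_add_right' hx.2 _).trans (add_le_add_left' hy.2 _)⟩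

theorem neg_le_neg_iff_and_neg_lf_neg_iff (x y : PGame.{u}) :
    (-y ≤ -x ↔ x ≤ y) ∧ (-y ⧏ -x ↔ x ⧏ y) := by
  induction x generalizing y with | mk xl xr xL xR IHxl IHxr =>
  induction y with | mk yl yr yL yR IHyl IHyr =>
  refine ⟨⟨fun h => ?_, fun h => ?_⟩, ⟨fun h => ?_, fun h => ?_⟩⟩
  · obtain ⟨hL, hR⟩ := mk_le_mk.1 h
    exact mk_le_mk.2 ⟨fun i => (IHxl i _).2.1 (hR i), fun j => (IHyr j).2.1 (hL j)⟩
  · obtain ⟨hL, hR⟩ := mk_le_mk.1 h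
    exact mk_le_mk.2 ⟨fun j => (IHyr j).2.2 (hR j), fun i => (IHxl i _).2.2 (hL i)⟩
  · rcases mk_lf_mk.1 h with ⟨j, hj⟩ | ⟨i, hi⟩
    · exact mk_lf_mk.2 (Or.inr ⟨j, (IHxr j _).1.1 hj⟩)
    · exact mk_lf_mk.2 (Or.inl ⟨i, (IHyl i).1.1 hi⟩)
  · rcases mk_lf_mk.1 h with ⟨i, hi⟩ | ⟨j, hj⟩
    · exact mk_lf_mk.2 (Or.inr ⟨i, (IHyl i).1.2 hi⟩)
    · exact mk_lf_mk.2 (Or.inl ⟨j, (IHxr j _).1.2 hj⟩)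

theorem neg_le_neg_iff' {x y : PGame.{u}} : -y ≤ -x ↔ x ≤ y :=
  (neg_le_neg_iff_and_neg_lf_neg_iff x y).1

theorem neg_lt_neg_iff' {x y : PGame.{u}} : -y < -x ↔ x < y := by
  rw [lt_iff_le_not_ge, lt_iff_le_not_ge, neg_le_neg_iff', neg_le_neg_iff']

theorem neg_congr {x y : PGame.{u}} (h : x ≈ y) : -x ≈ -y :=
  ⟨neg_le_neg_iff'.2 h.2, neg_le_neg_iff'.2 h.1⟩

theorem add_neg_equiv (x : PGame.{u}) : x + -x ≈ 0 := by
  induction x with | mk xl xr xL xR IHl IHr =>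
  rw [neg_mk, mk_add_mk]
  refine ⟨mk_le_mk.2 ⟨Sum.forall.2 ⟨fun i => ?_, fun j => ?_⟩, nofun⟩,
    mk_le_mk.2 ⟨nofun, Sum.forall.2 ⟨fun j => ?_, fun i => ?_⟩⟩⟩
  · exact add_lf_of_add_moveRight_le (j := i) (IHl i).1
  · exact add_lf_of_moveRight_add_le (j := j) (IHr j).1
  · exact lf_add_of_le_add_moveLeft (i := j) (IHr j).2
  · exact lf_add_of_le_moveLeft_add (i := i) (IHl i).2

end Add

end SetTheory.PGame

namespace SetTheory

abbrev Game : Type (u + 1) :=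
  Quotient PGame.setoid.{u}

namespace Game

noncomputable instance : LE Game.{u} :=
  ⟨Quotient.lift₂ (· ≤ ·) fun _ _ _ _ hx hy => propext (PGame.le_congr hx hy)⟩

noncomputable instance : LT Game.{u} :=
  ⟨fun a b => a ≤ b ∧ ¬ b ≤ a⟩

noncomputable instance : PartialOrder Game.{u} where
  lt_iff_le_not_ge _ _ := Iff.rfl
  le_refl := by rintro ⟨x⟩; exact le_refl x
  le_trans := by rintro ⟨x⟩ ⟨y⟩ ⟨z⟩; exact PGame.le_trans
  le_antisymm := by rintro ⟨x⟩ ⟨y⟩ h₁ h₂; exact Quot.sound ⟨h₁, h₂⟩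

/-- Overrides `Quotient.instPreorder`, the transitive closure of `≤` on representatives, which
instance search would otherwise find first. -/
noncomputable instance : Preorder Game.{u} :=
  PartialOrder.toPreorder

instance : Zero Game.{u} :=
  ⟨⟦0⟧⟩

instance : Add Game.{u} :=
  ⟨Quotient.map₂ (· + ·) fun _ _ hx _ _ hy => PGame.add_congr hx hy⟩

instance : Neg Game.{u} :=
  ⟨Quotient.map Neg.neg fun _ _ h => PGame.neg_congr h⟩

instance : AddCommGroup Game.{u} where
  add_assoc := by rintro ⟨x⟩ ⟨y⟩ ⟨z⟩; exact Quot.sound (PGame.add_assoc_equiv x y z)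
  zero_add := by rintro ⟨x⟩; exact Quot.sound (PGame.zero_add_equiv x)
  add_zero := by rintro ⟨x⟩; exact Quot.sound (PGame.add_zero_equiv x)
  add_comm := by rintro ⟨x⟩ ⟨y⟩; exact Quot.sound (PGame.add_comm_equiv x y)
  neg_add_cancel := by
    rintro ⟨x⟩
    exact Quot.sound (PGame.equiv_trans (PGame.add_comm_equiv (-x) x) (PGame.add_neg_equiv x))
  nsmul := nsmulRec
  zsmul := zsmulRec

instance : IsOrderedAddMonoid Game.{u} where
  add_le_add_left := by
    rintro ⟨x⟩ ⟨y⟩ h ⟨z⟩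
    exact PGame.add_le_add_right' (x := x) (y := y) h z

end Game

namespace PGame

variable {x y : PGame.{u}}

theorem quot_add (x y : PGame.{u}) : (⟦x + y⟧ : Game) = ⟦x⟧ + ⟦y⟧ :=
  rfl

theorem quot_sub (x y : PGame.{u}) : (⟦x - y⟧ : Game) = ⟦x⟧ - ⟦y⟧ :=
  rfl

theorem quot_zero : (⟦0⟧ : Game.{u}) = 0 :=
  rfl

theorem le_iff_game_le : x ≤ y ↔ (⟦x⟧ : Game) ≤ ⟦y⟧ :=
  Iff.rfl

theorem lt_iff_game_lt : x < y ↔ (⟦x⟧ : Game) < ⟦y⟧ :=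
  Iff.rfl

theorem lt_iff_sub_pos : x < y ↔ 0 < y - x := by
  rw [lt_iff_game_lt, lt_iff_game_lt, quot_sub, quot_zero, sub_pos]

theorem add_lt_add_right' (h : x < y) (z : PGame.{u}) : x + z < y + z :=
  add_lt_add_left (lt_iff_game_lt.1 h) ⟦z⟧

theorem add_lt_add_left' (h : x < y) (z : PGame.{u}) : z + x < z + y :=
  add_lt_add_right (lt_iff_game_lt.1 h) ⟦z⟧

theorem add_lf_add_of_lf_of_le {w x y z : PGame.{u}} (hwx : w ⧏ x) (hyz : y ≤ z) :
    w + y ⧏ x + z :=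
  not_le.1 fun h => not_le.2 hwx <| le_iff_game_le.2 <|
    (add_le_add_iff_right (⟦z⟧ : Game)).1
      ((le_iff_game_le.1 h).trans (add_le_add le_rfl (le_iff_game_le.1 hyz)))

def Numeric : PGame.{u} → Prop
  | ⟨_, _, L, R⟩ => (∀ i j, L i < R j) ∧ (∀ i, Numeric (L i)) ∧ ∀ j, Numeric (R j)

namespace Numeric

variable {x y : PGame.{u}}

theorem moveLeft_lt_moveRight (o : Numeric x) (i : x.LeftMoves) (j : x.RightMoves) :
    x.moveLeft i < x.moveRight j := by
  cases x; exact o.1 i j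

theorem moveLeft (o : Numeric x) (i : x.LeftMoves) : Numeric (x.moveLeft i) := by
  cases x; exact o.2.1 i

theorem moveRight (o : Numeric x) (j : x.RightMoves) : Numeric (x.moveRight j) := by
  cases x; exact o.2.2 j

theorem lf_asymm (ox : Numeric x) (oy : Numeric y) : x ⧏ y → ¬ y ⧏ x := by
  induction x generalizing y with | mk xl xr xL xR IHxl IHxr =>
  cases y with | mk yl yr yL yR =>
  intro h₁ h₂
  rcases mk_lf_mk.1 h₁ with ⟨i, h₁⟩ | ⟨j, h₁⟩ <;> rcases mk_lf_mk.1 h₂ with ⟨i', h₂⟩ | ⟨j', h₂⟩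
  · exact IHxl i' (ox.moveLeft i') (oy.moveLeft i) (moveLeft_lf_of_le h₁ i')
      (moveLeft_lf_of_le h₂ i)
  · exact not_le.2 (lf_of_lt (oy.moveLeft_lt_moveRight i j')) (h₂.trans h₁)
  · exact not_le.2 (lf_of_lt (ox.moveLeft_lt_moveRight i' j)) (h₁.trans h₂)
  · exact IHxr j (ox.moveRight j) (oy.moveRight j') (lf_moveRight_of_le h₁ j')
      (lf_moveRight_of_le h₂ j)

theorem lt_of_lf (ox : Numeric x) (oy : Numeric y) (h : x ⧏ y) : x < y :=
  lt_iff_le_not_ge.2 ⟨not_lf.1 (ox.lf_asymm oy h), not_le.2 h⟩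

theorem moveLeft_lt (o : Numeric x) (i : x.LeftMoves) : x.moveLeft i < x :=
  (o.moveLeft i).lt_of_lf o (moveLeft_lf i)

theorem lt_moveRight (o : Numeric x) (j : x.RightMoves) : x < x.moveRight j :=
  o.lt_of_lf (o.moveRight j) (lf_moveRight j)

protected theorem neg (o : Numeric x) : Numeric (-x) := by
  induction x with | mk xl xr xL xR IHl IHr =>
  exact ⟨fun j i => neg_lt_neg_iff'.2 (o.1 i j), fun j => IHr j (o.2.2 j),
    fun i => IHl i (o.2.1 i)⟩

protected theorem add (ox : Numeric x) (oy : Numeric y) : Numeric (x + y) := by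
  induction x generalizing y with | mk xl xr xL xR IHxl IHxr =>
  induction y with | mk yl yr yL yR IHyl IHyr =>
  set x := mk xl xr xL xR
  set y := mk yl yr yL yR
  refine ⟨?_, Sum.forall.2 ⟨fun i => IHxl i (ox.moveLeft i) oy, fun i => IHyl i (oy.moveLeft i)⟩,
    Sum.forall.2 ⟨fun j => IHxr j (ox.moveRight j) oy, fun j => IHyr j (oy.moveRight j)⟩⟩
  rintro (i | i) (j | j)
  · exact add_lt_add_right' (ox.moveLeft_lt_moveRight i j) y
  · exact (IHxl i (ox.moveLeft i) oy).lt_of_lf (IHyr j (oy.moveRight j))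
      (add_lf_add_of_lf_of_le (moveLeft_lf (x := x) i) (oy.lt_moveRight j).le)
  · exact (IHyl i (oy.moveLeft i)).lt_of_lf (IHxr j (ox.moveRight j) oy)
      (add_lf_add_of_lf_of_le (lf_moveRight (x := x) j) (oy.moveLeft_lt i).le)
  · exact add_lt_add_left' (oy.moveLeft_lt_moveRight i j) x

protected theorem sub (ox : Numeric x) (oy : Numeric y) : Numeric (x - y) :=
  ox.add oy.neg

protected theorem nsmulPG (o : Numeric x) (n : ℕ) : Numeric (nsmulPG n x) := by
  induction n with
  | zero => exact ⟨nofun, nofun, nofun⟩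
  | succ n ih => exact ih.add o

protected theorem zsmulPG (o : Numeric x) : ∀ m : ℤ, Numeric (zsmulPG m x)
  | Int.ofNat n => o.nsmulPG n
  | Int.negSucc n => (o.nsmulPG (n + 1)).neg

end Numeric

theorem numeric_zero : Numeric (0 : PGame.{u}) :=
  ⟨nofun, nofun, nofun⟩

theorem numeric_powHalf (n : ℕ) : Numeric (powHalf.{u} n) := by
  induction n with
  | zero => exact ⟨nofun, fun _ => numeric_zero, nofun⟩
  | succ n ih =>
    refine ⟨fun _ _ => ?_, fun _ => numeric_zero, fun _ => ih⟩
    cases n <;> exact ih.moveLeft_lt PUnit.unit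

end PGame

end SetTheory

namespace SeqCompound

open PGame

theorem Dicotic.neg {G : PGame} (hG : Dicotic G) : Dicotic (-G) := by
  induction G with | mk α β L R IHL IHR =>
  obtain ⟨hiff, hL, hR⟩ := hG
  exact ⟨hiff.symm, fun b => IHR b (hR b), fun a => IHL a (hL a)⟩

theorem Dicotic.add {G H : PGame} (hG : Dicotic G) (hH : Dicotic H) : Dicotic (G + H) := by
  induction G generalizing H with | mk α β L R IHL IHR =>
  induction H with | mk γ δ L' R' IHL' IHR' =>
  obtain ⟨hiff, hL, hR⟩ := id hG
  obtain ⟨hiff', hL', hR'⟩ := id hH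
  refine ⟨?_, Sum.forall.2 ⟨fun a => IHL a (hL a) hH, fun c => IHL' c (hL' c)⟩,
    Sum.forall.2 ⟨fun b => IHR b (hR b) hH, fun d => IHR' d (hR' d)⟩⟩
  simp only [nonempty_sum, hiff, hiff']

theorem Dicotic.le_of_numeric_pos {D : PGame} (hD : Dicotic D) :
    ∀ {z : PGame}, Numeric z → 0 < z → D ≤ z := by
  -- Carrying `D ⧏ z` along lets the induction descend one level at a time.
  suffices ∀ z, Numeric z → 0 < z → D ≤ z ∧ D ⧏ z from fun {_} hz hpos => (this _ hz hpos).1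
  induction D with | mk α β L R IHL IHR =>
  obtain ⟨hiff, hL, hR⟩ := hD
  have hlf : ∀ z, Numeric z → 0 < z → mk α β L R ⧏ z := by
    intro z hz hpos
    by_cases hβ : Nonempty β
    · obtain ⟨b⟩ := hβ
      exact lf_of_moveRight_le (j := b) (IHR b (hR b) z hz hpos).1
    · have : IsEmpty α := not_nonempty_iff.1 (mt hiff.1 hβ)
      have : IsEmpty β := not_nonempty_iff.1 hβ
      exact mk_equiv_zero.1.trans_lf (lf_of_lt hpos)
  refine fun z hz hpos => ⟨le_iff_forall_lf.2 ⟨fun a => (IHL a (hL a) z hz hpos).2, fun j => ?_⟩,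
    hlf z hz hpos⟩
  exact hlf _ (hz.moveRight j) (hpos.trans (hz.lt_moveRight j))

theorem Dicotic.add_le_add_of_lt {A B y y' : PGame} (hA : Dicotic A) (hB : Dicotic B)
    (hy : Numeric y) (hy' : Numeric y') (h : y < y') : A + y ≤ B + y' := by
  have hsub : A - B ≤ y' - y :=
    (hA.add hB.neg).le_of_numeric_pos (hy'.sub hy) (lt_iff_sub_pos.1 h)
  rw [le_iff_game_le, quot_sub, quot_sub, sub_le_sub_iff] at hsub
  rwa [le_iff_game_le, quot_add, quot_add, add_comm ⟦B⟧]

section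

variable {α β : Type u} {L : α → PGame} {R : β → PGame} (H : PGame)

theorem seqc_mk_of_nonempty (hα : Nonempty α) (hβ : Nonempty β) :
    seqc (mk α β L R) H = mk α β (fun a => seqc (L a) H) (fun b => seqc (R b) H) := by
  rw [seqc, if_pos hα, if_pos hβ]

theorem seqc_mk_of_isEmpty [IsEmpty α] [IsEmpty β] : seqc (mk α β L R) H = H := by
  rw [seqc, if_neg (not_nonempty_iff.2 ‹_›), if_neg (not_nonempty_iff.2 ‹_›)]

theorem seqc_mk_equiv_add_of_isEmpty [IsEmpty α] [IsEmpty β] :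
    seqc (mk α β L R) H ≈ mk α β L R + H := by
  rw [seqc_mk_of_isEmpty]
  exact equiv_symm (equiv_trans (add_congr mk_equiv_zero (equiv_refl H)) (zero_add_equiv H))

end

theorem Dicotic.seqc_monotone {G : PGame} (hG : Dicotic G) : Monotone (seqc G) := by
  intro X X' h
  induction G with | mk α β L R IHL IHR =>
  obtain ⟨hiff, hL, hR⟩ := hG
  by_cases hα : Nonempty α
  · have hβ := hiff.1 hα
    rw [seqc_mk_of_nonempty _ hα hβ, seqc_mk_of_nonempty _ hα hβ, mk_le_mk]
    exact ⟨fun a => lf_of_le_moveLeft (i := a) (IHL a (hL a)),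
      fun b => lf_of_moveRight_le (j := b) (IHR b (hR b))⟩
  · have : IsEmpty α := not_nonempty_iff.1 hα
    have : IsEmpty β := not_nonempty_iff.1 (mt hiff.2 hα)
    rwa [seqc_mk_of_isEmpty, seqc_mk_of_isEmpty]

theorem Dicotic.seqc_le_add {G Y : PGame} (hG : Dicotic G) (hY : Numeric Y) :
    seqc G Y ≤ G + Y := by
  induction G with | mk α β L R IHL IHR =>
  obtain ⟨hiff, hL, hR⟩ := id hG
  by_cases hα : Nonempty α
  · have hβ := hiff.1 hα
    cases Y with | mk γ δ YL YR =>
    rw [seqc_mk_of_nonempty _ hα hβ, mk_add_mk, mk_le_mk, Sum.forall]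
    refine ⟨fun a => ?_, fun b => ?_, fun d => ?_⟩
    · exact (IHL a (hL a)).trans_lf (lf_of_le_moveLeft (i := Sum.inl a) le_rfl)
    · exact lf_of_moveRight_le (j := b) (IHR b (hR b))
    · obtain ⟨b⟩ := hβ
      exact lf_of_moveRight_le (j := b) ((IHR b (hR b)).trans
        ((hR b).add_le_add_of_lt hG hY (hY.moveRight d) (hY.lt_moveRight d)))
  · have : IsEmpty α := not_nonempty_iff.1 hα
    have : IsEmpty β := not_nonempty_iff.1 (mt hiff.2 hα)
    exact (seqc_mk_equiv_add_of_isEmpty Y).1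

theorem Dicotic.add_le_seqc {G Y : PGame} (hG : Dicotic G) (hY : Numeric Y) :
    G + Y ≤ seqc G Y := by
  induction G with | mk α β L R IHL IHR =>
  obtain ⟨hiff, hL, hR⟩ := id hG
  by_cases hα : Nonempty α
  · have hβ := hiff.1 hα
    cases Y with | mk γ δ YL YR =>
    rw [seqc_mk_of_nonempty _ hα hβ, mk_add_mk, mk_le_mk, Sum.forall]
    refine ⟨⟨fun a => ?_, fun c => ?_⟩, fun b => ?_⟩
    · exact lf_of_le_moveLeft (i := a) (IHL a (hL a))
    · obtain ⟨a⟩ := hα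
      exact lf_of_le_moveLeft (i := a)
        ((hG.add_le_add_of_lt (hL a) (hY.moveLeft c) hY (hY.moveLeft_lt c)).trans (IHL a (hL a)))
    · exact (lf_of_moveRight_le (x := mk α β L R + mk γ δ YL YR) (j := Sum.inl b) le_rfl).trans_le
        (IHR b (hR b))
  · have : IsEmpty α := not_nonempty_iff.1 hα
    have : IsEmpty β := not_nonempty_iff.1 (mt hiff.2 hα)
    exact (seqc_mk_equiv_add_of_isEmpty Y).2

theorem Dicotic.seqc_equiv_add_of_equiv_numeric {G X Y : PGame} (hG : Dicotic G) (hXY : X ≈ Y)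
    (hY : Numeric Y) : seqc G X ≈ G + X :=
  equiv_trans ⟨hG.seqc_monotone hXY.1, hG.seqc_monotone hXY.2⟩ <|
    equiv_trans ⟨hG.seqc_le_add hY, hG.add_le_seqc hY⟩ (add_congr (equiv_refl G) (equiv_symm hXY))

end SeqCompound

open SeqCompound in
theorem seqc_number_general (G X : PGame)
    (hG : Dicotic G)
    (hX : ∃ (m : ℤ) (n : ℕ), X ≈ PGame.zsmulPG m (PGame.powHalf n)) :
    seqc G X ≈ G + X := by
  obtain ⟨m, n, hXY⟩ := hX
  exact hG.seqc_equiv_add_of_equiv_numeric hXY ((PGame.numeric_powHalf n).zsmulPG m)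

open SeqCompound in
/-- if `G` is dicotic and `X` is a game of dyadic rational value,
then `G → X = G + X` as game values. -/
theorem seqc_number (G X : PGame) [PGame.Short G] [PGame.Short X]
    (hG : Dicotic G)
    (hX : ∃ (m : ℤ) (n : ℕ), X ≈ PGame.zsmulPG m (PGame.powHalf n)) :
    seqc G X ≈ G + X :=
  seqc_number_general G X hG hX
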